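/- arXiv:1203.5128 — 4 statements merged into one kernel-verified Lean document; each statement's English description precedes it below -/
import Mathlib

section
/- Let Ω be a finite set, w : Ω → ℝ, f : ℤ² → ℝ, ι : Ω → ℤ², and x ∈ ℤ². Let φ, φ₁, …, φ_N : ℝ → ℝ and c : ℝ → Fin N → ℝ satisfy the shiftability identity φ(s − τ) = Σ_{i=1}^{N} c(τ)ᵢ · φᵢ(s) for all real s, τ. Then: (a) Σ_{y ∈ Ω} w(y) · φ(f(x − ι(y)) − f(x)) · f(x − ι(y)) = Σ_{i=1}^{N} c(f(x))ᵢ · [Σ_{y ∈ Ω} w(y) · f(x − ι(y)) · φᵢ(f(x − ι(y)))]; and (b) Σ_{y ∈ Ω} w(y) · φ(f(x − ι(y)) − f(x)) = Σ_{i=1}^{N} c(f(x))ᵢ · [Σ_{y ∈ Ω} w(y) · φᵢ(f(x − ι(y)))]. -/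
open Finset

/-- Shiftability turns the numerator and denominator of the bilateral filter into fixed
linear combinations of spatially filtered auxiliary images `Fᵢ(x) = f(x)φᵢ(f(x))` and
`Gᵢ(x) = φᵢ(f(x))`. -/
theorem stmt_10 {α : Type*} (Ω : Finset α) (w : α → ℝ) (f : ℤ × ℤ → ℝ)
    (ι : α → ℤ × ℤ) (x : ℤ × ℤ) (N : ℕ)
    (φ : ℝ → ℝ) (φi : Fin N → ℝ → ℝ) (c : ℝ → Fin N → ℝ)
    (hshift : ∀ s τ : ℝ, φ (s - τ) = ∑ i : Fin N, c τ i * φi i s) :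
    (∑ y ∈ Ω, w y * φ (f (x - ι y) - f x) * f (x - ι y)
        = ∑ i : Fin N, c (f x) i * ∑ y ∈ Ω, w y * (f (x - ι y) * φi i (f (x - ι y)))) ∧
    (∑ y ∈ Ω, w y * φ (f (x - ι y) - f x)
        = ∑ i : Fin N, c (f x) i * ∑ y ∈ Ω, w y * φi i (f (x - ι y))) := by
  constructor <;>
  · simp only [hshift, Finset.mul_sum, Finset.sum_mul]
    rw [Finset.sum_comm]
    apply Finset.sum_congr rfl
    intros; apply Finset.sum_congr rfl
    intros; ring
end

section
/- Let R be a natural number, W = 2R + 1, and f : ℕ → ℝ. Suppose l : ℕ → ℝ satisfies: l(i) = f(i) whenever W divides i, and l(i + 1) = max(l(i), f(i + 1)) whenever W does not divide i + 1. Then for every i, l(i) equals the maximum of f(j) over the indices j with W·⌊i/W⌋ ≤ j ≤ i. -/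
open Finset

/-- Left running maximum of the MAX-FILTER algorithm: `l i` is the maximum of `f` over the
portion of `i`'s block (of size `W = 2R+1`) from the block start `W⌊i/W⌋` up to `i`. -/
theorem stmt_15 (R : ℕ) (W : ℕ) (hW : W = 2 * R + 1) (f : ℕ → ℝ) (l : ℕ → ℝ)
    (hl0 : ∀ i, W ∣ i → l i = f i)
    (hl1 : ∀ i, ¬ W ∣ (i + 1) → l (i + 1) = max (l i) (f (i + 1))) :
    ∀ i : ℕ, l i = (Finset.Icc (W * (i / W)) i).sup'
      (Finset.nonempty_Icc.mpr
        (by simpa [Nat.mul_comm] using Nat.div_mul_le_self i W)) f := by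
  intro i
  induction i with
  | zero =>
    simp [hl0 0 (dvd_zero W)]
  | succ j ih =>
    by_cases h : W ∣ (j + 1)
    · have h1 : W * ((j + 1) / W) = j + 1 := Nat.mul_div_cancel' h
      rw [hl0 _ h]
      rw [Finset.sup'_congr _ (by rw [h1]) (fun _ _ => rfl)]
      simp
    · have hdiv : (j + 1) / W = j / W := by
        rw [Nat.succ_div, if_neg h]; rfl
      have hle : W * (j / W) ≤ j := by
        simpa [Nat.mul_comm] using Nat.div_mul_le_self j W
      have hIcc : Finset.Icc (W * ((j + 1) / W)) (j + 1)
          = insert (j + 1) (Finset.Icc (W * (j / W)) j) := by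
        rw [hdiv]; ext x; simp [Nat.lt_succ_iff, Nat.le_succ_iff, le_trans hle (Nat.le_succ j)]; omega
      rw [hl1 j h, ih]
      rw [Finset.sup'_congr _ hIcc (fun _ _ => rfl)]
      rw [Finset.sup'_insert]
      rw [max_comm]
end

section
/- Let R be a natural number, W = 2R + 1, and f : ℕ → ℝ. Suppose r : ℕ → ℝ satisfies: r(i) = f(i) whenever i ≡ W − 1 (mod W), and r(i) = max(r(i + 1), f(i)) whenever i is not congruent to W − 1 modulo W. Then for every i, r(i) equals the maximum of f(j) over the indices j with i ≤ j ≤ W·⌊i/W⌋ + W − 1. -/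
open Finset

lemma sup'_Icc_step (f : ℕ → ℝ) (i E : ℕ) (h : i + 1 ≤ E)
    (h1 : (Finset.Icc i E).Nonempty) (h2 : (Finset.Icc (i+1) E).Nonempty) :
    (Finset.Icc i E).sup' h1 f = max ((Finset.Icc (i+1) E).sup' h2 f) (f i) := by
  have hset : Finset.Icc i E = insert i (Finset.Icc (i+1) E) := by
    ext x
    simp only [Finset.mem_Icc, Finset.mem_insert]
    omega
  rw [Finset.sup'_congr h1 hset (fun x _ => rfl), Finset.sup'_insert]
  exact max_comm _ _

lemma sup'_Icc_single (f : ℕ → ℝ) (i E : ℕ) (h : E = i)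
    (h1 : (Finset.Icc i E).Nonempty) : (Finset.Icc i E).sup' h1 f = f i := by
  apply le_antisymm
  · exact Finset.sup'_le _ _ (fun x hx => by
      simp only [Finset.mem_Icc] at hx
      have : x = i := by omega
      rw [this])
  · exact Finset.le_sup' f (by simp only [Finset.mem_Icc]; omega)

/-- Right running maximum of the MAX-FILTER algorithm: `r i` is the maximum of `f` over the
portion of `i`'s block (of size `W = 2R+1`) from `i` to the block end `W⌊i/W⌋ + W − 1`. -/
theorem stmt_16 (R : ℕ) (W : ℕ) (hW : W = 2 * R + 1) (f : ℕ → ℝ) (r : ℕ → ℝ)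
    (hr0 : ∀ i, i % W = W - 1 → r i = f i)
    (hr1 : ∀ i, i % W ≠ W - 1 → r i = max (r (i + 1)) (f i)) :
    ∀ i : ℕ, r i = (Finset.Icc i (W * (i / W) + W - 1)).sup'
      (Finset.nonempty_Icc.mpr
        (by
          have h1 := Nat.div_add_mod i W
          have h2 : i % W < W := Nat.mod_lt i (by omega)
          omega)) f := by
  have hWpos : 0 < W := by omega
  have key : ∀ k i, W - 1 - i % W = k → r i = (Finset.Icc i (W * (i / W) + W - 1)).sup'
      (Finset.nonempty_Icc.mpr
        (by
          have h1 := Nat.div_add_mod i W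
          have h2 : i % W < W := Nat.mod_lt i (by omega)
          omega)) f := by
    intro k
    induction k with
    | zero =>
      intro i hk
      have hmod : i % W < W := Nat.mod_lt i hWpos
      have hm : i % W = W - 1 := by omega
      have h1 := Nat.div_add_mod i W
      rw [hr0 i hm, sup'_Icc_single f i _ (by omega)]
    | succ n ih =>
      intro i hk
      have hmod : i % W < W := Nat.mod_lt i hWpos
      have hm : i % W ≠ W - 1 := by omega
      have h1 := Nat.div_add_mod i W
      have hW2 : 2 ≤ W := by omega
      have h2 : (i + 1) % W = i % W + 1 := by
        have hlt : i % W + 1 < W := by omega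
        rw [Nat.add_mod, Nat.one_mod_eq_one.mpr (by omega)]
        exact Nat.mod_eq_of_lt hlt
      have hdiv : (i + 1) / W = i / W := by
        have h3 := Nat.div_add_mod (i + 1) W
        have : W * ((i+1)/W) = W * (i/W) := by omega
        exact Nat.eq_of_mul_eq_mul_left hWpos this
      have ihs := ih (i+1) (by omega)
      simp only [hdiv] at ihs
      rw [hr1 i hm, ihs, ← sup'_Icc_step f i _ (by omega)]
  intro i
  exact key (W - 1 - i % W) i rfl
end

section
/- Let R be a natural number, W = 2R + 1, and f : ℕ → ℝ. Suppose l : ℕ → ℝ satisfies l(i) = f(i) whenever W divides i and l(i + 1) = max(l(i), f(i + 1)) whenever W does not divide i + 1, and r : ℕ → ℝ satisfies r(i) = f(i) whenever i ≡ W − 1 (mod W) and r(i) = max(r(i + 1), f(i)) whenever i is not congruent to W − 1 modulo W. Then for every i ≥ R, the maximum of f(j) over the window i − R ≤ j ≤ i + R equals max(r(i − R), l(i + R)). -/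
open Finset

/-!
Split the window `[i - R, i + R]`, which has length `W`, at the block boundary it may cross. The right
running maximum `r` at the window's left end is the maximum of `f` from there to the end of its block,
and the left running maximum `l` at the window's right end is the maximum of `f` from the start of its
block. Because the window has exactly the block length, these two intervals cover the window, so the
maximum of the two values is the maximum over the window.
-/

section RunningMax

variable {α : Type*} [LinearOrder α] {W : ℕ} (f : ℕ → α)

theorem max_sup'_Icc_eq_of_cover {a e s b : ℕ} (hae : a ≤ e) (hsb : s ≤ b) (has : a ≤ s)
    (hse : s ≤ e + 1) (heb : e ≤ b) :
    max ((Icc a e).sup' (nonempty_Icc.mpr hae) f) ((Icc s b).sup' (nonempty_Icc.mpr hsb) f) =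
      (Icc a b).sup' (nonempty_Icc.mpr (hae.trans heb)) f := by
  rw [← sup'_union]
  refine sup'_congr _ ?_ fun _ _ => rfl
  ext x
  simp only [mem_union, mem_Icc]
  omega

theorem sup'_Icc_succ_top {a b : ℕ} (h : a ≤ b) :
    (Icc a (b + 1)).sup' (nonempty_Icc.mpr (by omega)) f =
      max ((Icc a b).sup' (nonempty_Icc.mpr h) f) (f (b + 1)) :=
  (sup'_congr _ (insert_Icc_right_eq_Icc_add_one (by omega)).symm fun _ _ => rfl).trans
    ((sup'_insert _ _).trans (max_comm _ _))

theorem sup'_Icc_eq_max_succ_bot {a b : ℕ} (h : a < b) :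
    (Icc a b).sup' (nonempty_Icc.mpr h.le) f =
      max ((Icc (a + 1) b).sup' (nonempty_Icc.mpr h) f) (f a) :=
  (sup'_congr _ (insert_Icc_add_one_left_eq_Icc h.le).symm fun _ _ => rfl).trans
    ((sup'_insert _ _).trans (max_comm _ _))

theorem leftRunningMax_eq_sup'_Icc {l : ℕ → α} (hl0 : ∀ i, W ∣ i → l i = f i)
    (hl1 : ∀ i, ¬ W ∣ (i + 1) → l (i + 1) = max (l i) (f (i + 1))) (q m : ℕ) (hm : m < W) :
    l (W * q + m) = (Icc (W * q) (W * q + m)).sup' (nonempty_Icc.mpr (by omega)) f := by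
  induction m with
  | zero =>
    simp only [add_zero, Icc_self, sup'_singleton]
    exact hl0 _ (dvd_mul_right W q)
  | succ m ih =>
    have hnd : ¬ W ∣ W * q + m + 1 :=
      (Nat.dvd_add_right (dvd_mul_right W q)).not.mpr (Nat.not_dvd_of_pos_of_lt m.succ_pos hm)
    show l (W * q + m + 1) = _
    rw [hl1 _ hnd, ih (by omega)]
    exact (sup'_Icc_succ_top f (by omega)).symm

theorem rightRunningMax_eq_sup'_Icc {r : ℕ → α} (hr0 : ∀ i, i % W = W - 1 → r i = f i)
    (hr1 : ∀ i, i % W ≠ W - 1 → r i = max (r (i + 1)) (f i)) (q m : ℕ) (hm : m < W) :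
    r (W * q + m) = (Icc (W * q + m) (W * q + (W - 1))).sup' (nonempty_Icc.mpr (by omega)) f := by
  have hmod : (W * q + m) % W = m := by rw [Nat.mul_add_mod, Nat.mod_eq_of_lt hm]
  induction hk : W - 1 - m generalizing m with
  | zero =>
    obtain rfl : m = W - 1 := by omega
    simp only [Icc_self, sup'_singleton]
    exact hr0 _ hmod
  | succ k ih =>
    rw [hr1 _ (by omega), sup'_Icc_eq_max_succ_bot f (by omega)]
    congr 1
    exact ih (m + 1) (by omega) (by rw [Nat.mul_add_mod, Nat.mod_eq_of_lt]; omega) (by omega)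

end RunningMax

/-- Correctness of the MAX-FILTER algorithm: given the blockwise left running maximum `l`
and right running maximum `r` (window size `W = 2R+1`), for every position `i ≥ R` the
windowed maximum `max { f j : i − R ≤ j ≤ i + R }` equals `max (r (i − R)) (l (i + R))`. -/
theorem stmt_17 (R : ℕ) (W : ℕ) (hW : W = 2 * R + 1) (f : ℕ → ℝ)
    (l : ℕ → ℝ)
    (hl0 : ∀ i, W ∣ i → l i = f i)
    (hl1 : ∀ i, ¬ W ∣ (i + 1) → l (i + 1) = max (l i) (f (i + 1)))
    (r : ℕ → ℝ)
    (hr0 : ∀ i, i % W = W - 1 → r i = f i)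
    (hr1 : ∀ i, i % W ≠ W - 1 → r i = max (r (i + 1)) (f i)) :
    ∀ i : ℕ, R ≤ i →
      (Finset.Icc (i - R) (i + R)).sup'
        (Finset.nonempty_Icc.mpr (by omega)) f = max (r (i - R)) (l (i + R)) := by
  intro i hi
  have hW0 : 0 < W := by omega
  have hl := leftRunningMax_eq_sup'_Icc f hl0 hl1 ((i + R) / W) _ (Nat.mod_lt (i + R) hW0)
  have hr := rightRunningMax_eq_sup'_Icc f hr0 hr1 ((i - R) / W) _ (Nat.mod_lt (i - R) hW0)
  simp only [Nat.div_add_mod] at hl hr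
  have hqa := Nat.div_add_mod (i - R) W
  have hqb := Nat.div_add_mod (i + R) W
  have hma := Nat.mod_lt (i - R) hW0
  have hmb := Nat.mod_lt (i + R) hW0
  have hblocks : W * ((i + R) / W) ≤ W * ((i - R) / W) + W := by
    rw [← mul_add_one]
    refine Nat.mul_le_mul_left W ?_
    rw [← Nat.add_div_right _ hW0]
    exact Nat.div_le_div_right (by omega)
  rw [hl, hr, max_sup'_Icc_eq_of_cover] <;> omega
end
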